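/- (Completeness of type inference) If N is a β-normal form, the judgement N : σ in context Γ is derivable in system SM_r, and Infer(N) = (Γ', σ'), then there exists a type substitution s such that s(Γ') = Γ and s(σ') = σ. -/

import Mathlib

set_option maxHeartbeats 1000000

namespace DBIT

/-- Terms of the λ_dB-calculus.  `var k` denotes the de Bruijn index `k+1`
(de Bruijn indices are *positive* natural numbers). -/
inductive Tm : Type
  | var : ℕ → Tm
  | app : Tm → Tm → Tm
  | lam : Tm → Tm
deriving DecidableEq

/-- The set of free indices of a term. -/
def FI : Tm → Finset ℕ
  | .var k => {k + 1}
  | .app M N => FI M ∪ FI N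
  | .lam M => ((FI M).filter (fun n => 1 < n)).image (fun n => n - 1)

/-- `supFI M` is the greatest free index of `M` (and `0` if `FI M = ∅`). -/
def supFI (M : Tm) : ℕ := (FI M).sup id

/-- Lift with cut-off: increment all indices that are free under `k` binders. -/
def liftRec (k : ℕ) : Tm → Tm
  | .var n => if k ≤ n then .var (n + 1) else .var n
  | .app M N => .app (liftRec k M) (liftRec k N)
  | .lam M => .lam (liftRec (k + 1) M)

/-- The lift `M⁺` of `M`: increment all free indices by one. -/
def lift (M : Tm) : Tm := liftRec 0 M

/-- β-substitution: `subst k N M` is `{k+1 / N} M`. -/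
def subst (k : ℕ) (N : Tm) : Tm → Tm
  | .app M1 M2 => .app (subst k N M1) (subst k N M2)
  | .lam M1 => .lam (subst (k + 1) (lift N) M1)
  | .var m => if k < m then .var (m - 1) else if m = k then N else .var m

/-- One-step β-reduction: the compatible closure of the β-contraction
`(λ.M) N →β {1/N} M`. -/
inductive Beta : Tm → Tm → Prop
  | beta (M N : Tm) : Beta (.app (.lam M) N) (subst 0 N M)
  | appL {M M' : Tm} (N : Tm) : Beta M M' → Beta (.app M N) (.app M' N)
  | appR (M : Tm) {N N' : Tm} : Beta N N' → Beta (.app M N) (.app M N')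
  | lam {M M' : Tm} : Beta M M' → Beta (.lam M) (.lam M')

/-- A term is a β-normal form when no β-reduction applies to it. -/
def IsNF (M : Tm) : Prop := ∀ N, ¬ Beta M N

/-- `appList h [N1, …, Nm] = (h N1 ⋯ Nm)`. -/
def appList (h : Tm) (Ns : List Tm) : Tm := Ns.foldl .app h

/-! ### Restricted intersection types -/

mutual
  /-- The set `T` of restricted intersection types: `τ ::= α | u → τ`. -/
  inductive Ty : Type
    | tvar : ℕ → Ty
    | arr : IU → Ty → Ty
  /-- The set `U`: `u ::= ω | u ∧ u | τ`. -/
  inductive IU : Type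
    | omega : IU
    | inter : IU → IU → IU
    | ofTy : Ty → IU
end

mutual
  /-- Equality of types in the quotient by commutativity/associativity of `∧`
  and neutrality of `ω`. -/
  inductive TyEq : Ty → Ty → Prop
    | refl (τ) : TyEq τ τ
    | symm {τ σ} : TyEq τ σ → TyEq σ τ
    | trans {τ σ ρ} : TyEq τ σ → TyEq σ ρ → TyEq τ ρ
    | arr {u v τ σ} : UEq u v → TyEq τ σ → TyEq (.arr u τ) (.arr v σ)
  /-- Equality of `U`-elements in the quotient: `∧` is commutative, associative
  and has `ω` as neutral element. -/
  inductive UEq : IU → IU → Prop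
    | refl (u) : UEq u u
    | symm {u v} : UEq u v → UEq v u
    | trans {u v w} : UEq u v → UEq v w → UEq u w
    | comm (u v) : UEq (.inter u v) (.inter v u)
    | assoc (u v w) : UEq (.inter (.inter u v) w) (.inter u (.inter v w))
    | omega_left (u) : UEq (.inter .omega u) u
    | inter {u u' v v'} : UEq u u' → UEq v v' → UEq (.inter u v) (.inter u' v')
    | ofTy {τ σ} : TyEq τ σ → UEq (.ofTy τ) (.ofTy σ)
end

/-- Contexts: finite lists of elements of `U`. -/
abbrev Ctx := List IU

/-- Equality of contexts in the quotient (componentwise). -/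
def CtxEq (Γ Δ : Ctx) : Prop := List.Forall₂ UEq Γ Δ

/-- The extension of `∧` to contexts (with `nil` neutral). -/
def ctxAnd : Ctx → Ctx → Ctx
  | [], Δ => Δ
  | u :: Γ, [] => u :: Γ
  | u :: Γ, v :: Δ => .inter u v :: ctxAnd Γ Δ

/-- `ω^n`: the context consisting of `n` copies of `ω`. -/
def omegas (n : ℕ) : Ctx := List.replicate n .omega

/-- `arrChain [σ1,…,σm] τ = σ1 → ⋯ → σm → τ`. -/
def arrChain (σs : List Ty) (τ : Ty) : Ty := σs.foldr (fun σ t => .arr (.ofTy σ) t) τ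

/-- `interOf [σ1,…,σn] = σ1 ∧ ⋯ ∧ σn` (and `ω` for the empty list). -/
def interOf : List Ty → IU
  | [] => .omega
  | σ :: σs => σs.foldl (fun u τ => .inter u (.ofTy τ)) (.ofTy σ)

mutual
  /-- Type variables occurring in a type. -/
  def tvT : Ty → Finset ℕ
    | .tvar a => {a}
    | .arr u τ => tvU u ∪ tvT τ
  /-- Type variables occurring in a `U`-element. -/
  def tvU : IU → Finset ℕ
    | .omega => ∅
    | .inter u v => tvU u ∪ tvU v
    | .ofTy τ => tvT τ
end

/-- Type variables occurring in a context. -/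
def tvC (Γ : Ctx) : Finset ℕ := Γ.foldr (fun u s => tvU u ∪ s) ∅

mutual
  /-- Application of a type substitution to a type. -/
  def substT (s : ℕ → Ty) : Ty → Ty
    | .tvar a => s a
    | .arr u τ => .arr (substU s u) (substT s τ)
  /-- Application of a type substitution to a `U`-element. -/
  def substU (s : ℕ → Ty) : IU → IU
    | .omega => .omega
    | .inter u v => .inter (substU s u) (substU s v)
    | .ofTy τ => .ofTy (substT s τ)
end

/-- Application of a type substitution to a context. -/
def substC (s : ℕ → Ty) (Γ : Ctx) : Ctx := Γ.map (substU s)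

/-! ### The typing systems SM and SM_r

Since types are quotiented by commutativity/associativity of `∧` and
neutrality of `ω`, the systems include a conversion rule for this
equality of types/contexts. -/

/-- The typing system `SM`.  Recall that `Tm.var k` is the de Bruijn index `k+1`. -/
inductive SM : Tm → Ctx → Ty → Prop
  | var (τ : Ty) : SM (.var 0) [.ofTy τ] τ
  | varn {k Γ τ} : SM (.var k) Γ τ → SM (.var (k + 1)) (.omega :: Γ) τ
  | arrI {M u Γ τ} : SM M (u :: Γ) τ → SM (.lam M) Γ (.arr u τ)
  | arrI' {M τ} : SM M [] τ → SM (.lam M) [] (.arr .omega τ)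
  | arrE' {M1 M2 Γ Δ τ σ} : SM M1 Γ (.arr .omega τ) → SM M2 Δ σ →
      SM (.app M1 M2) (ctxAnd Γ Δ) τ
  | arrE {M1 M2 : Tm} {Γ : Ctx} {τ : Ty} (σs : List Ty) (Δs : List Ctx)
      (hne : σs ≠ []) (hlen : Δs.length = σs.length)
      (h1 : SM M1 Γ (.arr (interOf σs) τ))
      (h2 : ∀ i, i < σs.length → SM M2 (Δs.getD i []) (σs.getD i (.tvar 0))) :
      SM (.app M1 M2) (Δs.foldl ctxAnd Γ) τ
  | conv {M Γ Γ' τ τ'} : SM M Γ τ → CtxEq Γ Γ' → TyEq τ τ' → SM M Γ' τ'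

/-- The typing system `SM_r`: as `SM` but with rule (var) replaced by (var_r). -/
inductive SMr : Tm → Ctx → Ty → Prop
  | varr (σs : List Ty) (a : ℕ) :
      SMr (.var 0) [.ofTy (arrChain σs (.tvar a))] (arrChain σs (.tvar a))
  | varn {k Γ τ} : SMr (.var k) Γ τ → SMr (.var (k + 1)) (.omega :: Γ) τ
  | arrI {M u Γ τ} : SMr M (u :: Γ) τ → SMr (.lam M) Γ (.arr u τ)
  | arrI' {M τ} : SMr M [] τ → SMr (.lam M) [] (.arr .omega τ)
  | arrE' {M1 M2 Γ Δ τ σ} : SMr M1 Γ (.arr .omega τ) → SMr M2 Δ σ →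
      SMr (.app M1 M2) (ctxAnd Γ Δ) τ
  | arrE {M1 M2 : Tm} {Γ : Ctx} {τ : Ty} (σs : List Ty) (Δs : List Ctx)
      (hne : σs ≠ []) (hlen : Δs.length = σs.length)
      (h1 : SMr M1 Γ (.arr (interOf σs) τ))
      (h2 : ∀ i, i < σs.length → SMr M2 (Δs.getD i []) (σs.getD i (.tvar 0))) :
      SMr (.app M1 M2) (Δs.foldl ctxAnd Γ) τ
  | conv {M Γ Γ' τ τ'} : SMr M Γ τ → CtxEq Γ Γ' → TyEq τ τ' → SMr M Γ' τ'

/-- The type variables of a typing (pair context/type). -/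
def tvP (Γ : Ctx) (τ : Ty) : Finset ℕ := tvC Γ ∪ tvT τ

/-- The type-inference algorithm `Infer` for β-normal forms, as a relation
(the algorithm is nondeterministic in the choice of the fresh type variables;
freshness is expressed by the disjointness side conditions). -/
inductive InferR : Tm → Ctx → Ty → Prop
  | var (k a : ℕ) : InferR (.var k) (omegas k ++ [.ofTy (.tvar a)]) (.tvar a)
  | lamCons {N : Tm} {u : IU} {Γ : Ctx} {σ : Ty} :
      InferR N (u :: Γ) σ → InferR (.lam N) Γ (.arr u σ)
  | lamNil {N : Tm} {σ : Ty} :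
      InferR N [] σ → InferR (.lam N) [] (.arr .omega σ)
  | app (k : ℕ) (Ns : List Tm) (Γs : List Ctx) (σs : List Ty) (a : ℕ)
      (hne : Ns ≠ [])
      (hlen1 : Γs.length = Ns.length) (hlen2 : σs.length = Ns.length)
      (h : ∀ i, i < Ns.length →
        InferR (Ns.getD i (.var 0)) (Γs.getD i []) (σs.getD i (.tvar 0)))
      (hdisj : ∀ i j, i < Ns.length → j < Ns.length → i ≠ j →
        Disjoint (tvP (Γs.getD i []) (σs.getD i (.tvar 0)))
                 (tvP (Γs.getD j []) (σs.getD j (.tvar 0))))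
      (ha : ∀ i, i < Ns.length → a ∉ tvP (Γs.getD i []) (σs.getD i (.tvar 0))) :
      InferR (appList (.var k) Ns)
        (Γs.foldl ctxAnd (omegas k ++ [.ofTy (arrChain σs (.tvar a))]))
        (.tvar a)

/-! ### The subsets T_C, T_NF, U_C and C-types -/

mutual
  /-- `ρ ∈ T_C ::= α | φ→ρ` with `φ ∈ T_NF`. -/
  inductive IsTC : Ty → Prop
    | tvar (a : ℕ) : IsTC (.tvar a)
    | arr {φ ρ} : IsTNF φ → IsTC ρ → IsTC (.arr (.ofTy φ) ρ)
  /-- `φ ∈ T_NF ::= α | v→φ` with `v ∈ U_C`. -/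
  inductive IsTNF : Ty → Prop
    | tvar (a : ℕ) : IsTNF (.tvar a)
    | arr {v φ} : IsUC v → IsTNF φ → IsTNF (.arr v φ)
  /-- `v ∈ U_C ::= ω | v∧v | ρ` with `ρ ∈ T_C`. -/
  inductive IsUC : IU → Prop
    | omega : IsUC .omega
    | inter {u v} : IsUC u → IsUC v → IsUC (.inter u v)
    | ofTy {ρ} : IsTC ρ → IsUC (.ofTy ρ)
end

/-- `Γ ∈ C`: all elements of `Γ` lie in `U_C`. -/
def IsCCtx (Γ : Ctx) : Prop := ∀ u ∈ Γ, IsUC u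

/-- C-types: `tj Γ φ` is `Γ ⊢ φ` and `cj Δ` is `Δ ⊢`. -/
inductive CTy : Type
  | tj : Ctx → Ty → CTy
  | cj : Ctx → CTy

mutual
  /-- Number of positive occurrences of the variable `a` in a type. -/
  def posT : Ty → ℕ → ℕ
    | .tvar b, a => if b = a then 1 else 0
    | .arr u τ, a => negU u a + posT τ a
  /-- Number of negative occurrences of the variable `a` in a type. -/
  def negT : Ty → ℕ → ℕ
    | .tvar _, _ => 0
    | .arr u τ, a => posU u a + negT τ a
  /-- Number of positive occurrences of the variable `a` in a `U`-element. -/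
  def posU : IU → ℕ → ℕ
    | .omega, _ => 0
    | .inter u v, a => posU u a + posU v a
    | .ofTy τ, a => posT τ a
  /-- Number of negative occurrences of the variable `a` in a `U`-element. -/
  def negU : IU → ℕ → ℕ
    | .omega, _ => 0
    | .inter u v, a => negU u a + negU v a
    | .ofTy τ, a => negT τ a
end

/-- Positive occurrences in a context. -/
def posC (Γ : Ctx) (a : ℕ) : ℕ := (Γ.map (fun u => posU u a)).sum
/-- Negative occurrences in a context. -/
def negC (Γ : Ctx) (a : ℕ) : ℕ := (Γ.map (fun u => negU u a)).sum

/-- Positive occurrences of a variable in a C-type (polarity is flipped in the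
context part). -/
def posCT : CTy → ℕ → ℕ
  | .tj Γ φ, a => negC Γ a + posT φ a
  | .cj Γ, a => negC Γ a

/-- Negative occurrences of a variable in a C-type. -/
def negCT : CTy → ℕ → ℕ
  | .tj Γ φ, a => posC Γ a + negT φ a
  | .cj Γ, a => posC Γ a

/-- Type variables of a C-type. -/
def tvCT : CTy → Finset ℕ
  | .tj Γ φ => tvC Γ ∪ tvT φ
  | .cj Γ => tvC Γ

/-- A C-type is closed when each of its type variables has exactly one positive
and exactly one negative occurrence. -/
def IsClosed (T : CTy) : Prop := ∀ a ∈ tvCT T, posCT T a = 1 ∧ negCT T a = 1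

/-- The final (rightmost) type-variable occurrence of a type. -/
def finalT : Ty → ℕ
  | .tvar a => a
  | .arr _ φ => finalT φ

/-- The final (rightmost) type-variable occurrence of a `U`-element, if any. -/
def finalU : IU → Option ℕ
  | .omega => none
  | .inter u v => (finalU v).orElse (fun _ => finalU u)
  | .ofTy τ => some (finalT τ)

/-- Left subtypes of a type. -/
def Lty : Ty → Set IU
  | .tvar _ => ∅
  | .arr .omega φ => Lty φ
  | .arr v φ => insert v (Lty φ)

/-- Left subtypes of a context. -/
def Lctx : Ctx → Set IU
  | [] => ∅
  | .omega :: Γ => Lctx Γ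
  | v :: Γ => insert v (Lctx Γ)

/-- The set `L(T)` of left subtypes of a C-type. -/
def LCT : CTy → Set IU
  | .tj Γ φ => Lctx Γ ∪ Lty φ
  | .cj Γ => Lctx Γ

/-- A C-type `Γ ⊢ φ` is finally closed when the final occurrence of `φ` is
also the final occurrence of some type in `L(T)`. -/
def IsFC : CTy → Prop
  | .tj Γ φ => ∃ v ∈ LCT (.tj Γ φ), finalU v = some (finalT φ)
  | .cj _ => False

/-- Equality of C-types in the quotient. -/
def CTyEq : CTy → CTy → Prop
  | .tj Γ φ, .tj Δ ψ => CtxEq Γ Δ ∧ TyEq φ ψ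
  | .cj Γ, .cj Δ => CtxEq Γ Δ
  | _, _ => False

/-- `Γ` contains an element which is not (equal to) `ω`, i.e. `Γ` is not of the
form `ω^n` with `n ≥ 1` (nor `nil`). -/
def hasNonOmega (Γ : Ctx) : Prop := ∃ u ∈ Γ, ¬ UEq u .omega

/-- `Held T' T`: the C-type `T'` is held in `T = Γ ⊢ φ`, i.e. `T' = Γ' ⊢` or
`T' = Γ' ⊢ φ` with `Γ = Γ' ∧ Δ` for some context `Δ`, where `Γ'` is not of the
form `ω^n` (`Γ'` may be `nil` in the second case). -/
inductive Held : CTy → CTy → Prop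
  | cj {Γ' Δ Γ : Ctx} {φ : Ty} (hC : IsCCtx Γ') (hne : Γ' ≠ [])
      (hω : hasNonOmega Γ') (h : CtxEq Γ (ctxAnd Γ' Δ)) :
      Held (.cj Γ') (.tj Γ φ)
  | tj {Γ' Δ Γ : Ctx} {φ : Ty} (hC : IsCCtx Γ')
      (hω : Γ' = [] ∨ hasNonOmega Γ') (h : CtxEq Γ (ctxAnd Γ' Δ)) :
      Held (.tj Γ' φ) (.tj Γ φ)

/-- `T'` is strictly held in `T`. -/
def StrictlyHeld (T' T : CTy) : Prop := Held T' T ∧ ¬ CTyEq T' T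

/-- A C-type is minimally closed when no closed C-type is strictly held in it. -/
def IsMC (T : CTy) : Prop := ¬ ∃ T', StrictlyHeld T' T ∧ IsClosed T'

/-- A C-type is complete when it is closed, finally closed and minimally closed. -/
def IsComplete (T : CTy) : Prop := IsClosed T ∧ IsFC T ∧ IsMC T

/-- Principal C-types (Definition of principal). -/
inductive Principal : CTy → Prop
  | var (k a : ℕ)
      (hcomp : IsComplete (.tj (omegas k ++ [.ofTy (.tvar a)]) (.tvar a))) :
      Principal (.tj (omegas k ++ [.ofTy (.tvar a)]) (.tvar a))
  | lamNil {φ : Ty} (hcomp : IsComplete (.tj [] (.arr .omega φ)))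
      (hp : Principal (.tj [] φ)) :
      Principal (.tj [] (.arr .omega φ))
  | lam {Γ : Ctx} {v : IU} {φ : Ty} (hcomp : IsComplete (.tj Γ (.arr v φ)))
      (hcond : Γ ≠ [] ∨ ¬ UEq v .omega)
      (hp : Principal (.tj (v :: Γ) φ)) :
      Principal (.tj Γ (.arr v φ))
  | app {Γ : Ctx} {a : ℕ} (k : ℕ) (Γs : List Ctx) (φs : List Ty)
      (hcomp : IsComplete (.tj Γ (.tvar a)))
      (hne : φs ≠ []) (hlen : Γs.length = φs.length)
      (hC : ∀ Δ ∈ Γs, IsCCtx Δ)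
      (hΓ : CtxEq Γ (Γs.foldl ctxAnd (omegas k ++ [.ofTy (arrChain φs (.tvar a))])))
      (hp : ∀ i, i < φs.length →
        Principal (.tj (Γs.getD i []) (φs.getD i (.tvar 0)))) :
      Principal (.tj Γ (.tvar a))

/-- `FO(α, Γ)`: the set of pairs `(i, Γ_i)` (1-indexed) such that `α` is the
final occurrence of `Γ_i`. -/
def FO (a : ℕ) (Γ : Ctx) : Set (ℕ × IU) :=
  {p | 1 ≤ p.1 ∧ p.1 ≤ Γ.length ∧ p.2 = Γ.getD (p.1 - 1) .omega ∧
       finalU p.2 = some a}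

/-!
The head variable of a β-normal form is typed by (var_r) with an arrow chain
`σ₁ → ⋯ → σₙ → β` whose domains are single types, never proper intersections. Inverting an
SM_r-derivation of `n N₁ ⋯ Nₘ` along its spine therefore shows that each `Nᵢ` is typed exactly
once, say with `eᵢ` in `Δᵢ`, and that the head receives `e₁ → ⋯ → eₘ → ρ`. By induction there is
a substitution `sᵢ` taking `Infer(Nᵢ)` to `(Δᵢ, eᵢ)`; since the `Infer(Nᵢ)` are built from
pairwise disjoint fresh variables, the `sᵢ` glue, together with `α ↦ ρ`, into one substitution.
-/

instance : Std.Refl UEq := ⟨UEq.refl⟩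
instance : Std.Refl TyEq := ⟨TyEq.refl⟩
instance : IsTrans Ty TyEq := ⟨fun _ _ _ => TyEq.trans⟩

namespace CtxEq

theorem refl (Γ : Ctx) : CtxEq Γ Γ :=
  List.forall₂_refl Γ

theorem symm {Γ Δ : Ctx} (h : CtxEq Γ Δ) : CtxEq Δ Γ :=
  List.Forall₂.flip (List.Forall₂.imp (fun _ _ huv => huv.symm) h)

theorem trans {Γ Δ Θ : Ctx} (h₁ : CtxEq Γ Δ) (h₂ : CtxEq Δ Θ) : CtxEq Γ Θ := by
  induction h₁ generalizing Θ with
  | nil => exact h₂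
  | cons huv _ ih =>
    cases h₂ with
    | cons hvw h₂ => exact .cons (huv.trans hvw) (ih h₂)

theorem length_eq {Γ Δ : Ctx} (h : CtxEq Γ Δ) : Γ.length = Δ.length :=
  List.Forall₂.length_eq h

end CtxEq

instance : Std.Refl CtxEq := ⟨CtxEq.refl⟩

/-- `TyEq` unfolded once; it is preserved by `TyEq`, so type constructors are injective and
disjoint modulo the equations on `∧`. -/
def TyEqHead : Ty → Ty → Prop
  | .tvar a, .tvar b => a = b
  | .arr u τ, .arr v σ => UEq u v ∧ TyEq τ σ
  | _, _ => False

theorem TyEqHead.refl : ∀ τ : Ty, TyEqHead τ τ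
  | .tvar _ => rfl
  | .arr u τ => ⟨.refl u, .refl τ⟩

theorem TyEqHead.symm : ∀ {τ σ : Ty}, TyEqHead τ σ → TyEqHead σ τ
  | .tvar _, .tvar _, h => Eq.symm h
  | .arr _ _, .arr _ _, h => ⟨h.1.symm, h.2.symm⟩

theorem TyEqHead.trans : ∀ {τ σ ρ : Ty}, TyEqHead τ σ → TyEqHead σ ρ → TyEqHead τ ρ
  | .tvar _, .tvar _, .tvar _, h₁, h₂ => Eq.trans h₁ h₂
  | .arr _ _, .arr _ _, .arr _ _, h₁, h₂ => ⟨h₁.1.trans h₂.1, h₁.2.trans h₂.2⟩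

theorem TyEq.head : ∀ {τ σ : Ty}, TyEq τ σ → TyEqHead τ σ
  | _, _, .refl τ => .refl τ
  | _, _, .symm h => h.head.symm
  | _, _, .trans h₁ h₂ => h₁.head.trans h₂.head
  | _, _, .arr hu hτ => ⟨hu, hτ⟩

theorem TyEq.arr_inj {u v : IU} {τ σ : Ty} (h : TyEq (.arr u τ) (.arr v σ)) :
    UEq u v ∧ TyEq τ σ :=
  h.head

theorem TyEq.arr_ne_tvar {u : IU} {τ : Ty} {b : ℕ} : ¬ TyEq (.arr u τ) (.tvar b) :=
  fun h => h.head

def components : IU → Multiset Ty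
  | .omega => 0
  | .inter u v => components u + components v
  | .ofTy τ => {τ}

theorem components_interOf (σs : List Ty) : components (interOf σs) = σs := by
  suffices ∀ (u : IU) (σs : List Ty),
      components (σs.foldl (fun u τ => .inter u (.ofTy τ)) u) = components u + σs by
    cases σs with
    | nil => rfl
    | cons σ σs => simpa [interOf, components] using this (.ofTy σ) σs
  intro u σs
  induction σs generalizing u with
  | nil => simp
  | cons τ σs ih => simp [ih, components, add_assoc]

theorem rel_tyEq_refl (m : Multiset Ty) : Multiset.Rel TyEq m m :=
  Multiset.rel_refl_of_refl_on fun τ _ => .refl τ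

theorem UEq.components_rel : ∀ {u v : IU}, UEq u v →
    Multiset.Rel TyEq (components u) (components v)
  | _, _, .refl u => rel_tyEq_refl _
  | _, _, .symm h => (Multiset.rel_flip.2 h.components_rel).mono fun _ _ _ _ h => h.symm
  | _, _, .trans h₁ h₂ => h₁.components_rel.trans _ h₂.components_rel
  | _, _, .comm u v => by rw [components, components, add_comm]; exact rel_tyEq_refl _
  | _, _, .assoc u v w => by simp only [components, add_assoc]; exact rel_tyEq_refl _
  | _, _, .omega_left u => by rw [components, components, zero_add]; exact rel_tyEq_refl _
  | _, _, .inter h₁ h₂ => h₁.components_rel.add h₂.components_rel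
  | _, _, .ofTy h => Multiset.Rel.cons h .zero

theorem UEq.omega_ne_ofTy {σ : Ty} : ¬ UEq .omega (.ofTy σ) := fun h => by
  simpa [components, Multiset.rel_zero_left] using h.components_rel

theorem UEq.interOf_ofTy_singleton {es : List Ty} {σ : Ty} (h : UEq (interOf es) (.ofTy σ)) :
    ∃ e, es = [e] ∧ TyEq e σ := by
  have hrel := h.components_rel
  rw [components_interOf, components, ← Multiset.cons_zero] at hrel
  obtain ⟨e, es', he, hrest, hes⟩ := Multiset.rel_cons_right.1 hrel
  rw [Multiset.rel_zero_right.1 hrest, Multiset.cons_zero, Multiset.coe_eq_singleton] at hes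
  exact ⟨e, hes, he⟩

theorem ctxAnd_congr {Γ Γ' Δ Δ' : Ctx} (hΓ : CtxEq Γ Γ') (hΔ : CtxEq Δ Δ') :
    CtxEq (ctxAnd Γ Δ) (ctxAnd Γ' Δ') := by
  induction hΓ generalizing Δ Δ' with
  | nil => exact hΔ
  | cons hu hΓ ih =>
    cases hΔ with
    | nil => exact .cons hu hΓ
    | cons hv hΔ => exact .cons (.inter hu hv) (ih hΔ)

theorem foldl_ctxAnd_congr {Γs Δs : List Ctx} (hs : List.Forall₂ CtxEq Γs Δs) {Γ Δ : Ctx}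
    (h : CtxEq Γ Δ) : CtxEq (Γs.foldl ctxAnd Γ) (Δs.foldl ctxAnd Δ) := by
  induction hs generalizing Γ Δ with
  | nil => exact h
  | cons h₁ _ ih => exact ih (ctxAnd_congr h h₁)

theorem arrChain_congr {σs σs' : List Ty} (hs : List.Forall₂ TyEq σs σs') {τ τ' : Ty}
    (h : TyEq τ τ') : TyEq (arrChain σs τ) (arrChain σs' τ') := by
  induction hs with
  | nil => exact h
  | cons h₁ _ ih => exact .arr (.ofTy h₁) ih

theorem arrChain_append (σs σs' : List Ty) (τ : Ty) :
    arrChain (σs ++ σs') τ = arrChain σs (arrChain σs' τ) :=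
  List.foldr_append

mutual

theorem substT_congr {s s' : ℕ → Ty} :
    ∀ τ : Ty, (∀ x ∈ tvT τ, s x = s' x) → substT s τ = substT s' τ
  | .tvar a, h => h a (by simp [tvT])
  | .arr u τ, h => by
    simp only [tvT, Finset.mem_union] at h
    rw [substT, substT, substU_congr u fun x hx => h x (.inl hx),
      substT_congr τ fun x hx => h x (.inr hx)]

theorem substU_congr {s s' : ℕ → Ty} :
    ∀ u : IU, (∀ x ∈ tvU u, s x = s' x) → substU s u = substU s' u
  | .omega, _ => rfl
  | .inter u v, h => by
    simp only [tvU, Finset.mem_union] at h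
    rw [substU, substU, substU_congr u fun x hx => h x (.inl hx),
      substU_congr v fun x hx => h x (.inr hx)]
  | .ofTy τ, h => by rw [substU, substU, substT_congr τ h]

end

theorem substC_congr {s s' : ℕ → Ty} :
    ∀ Γ : Ctx, (∀ x ∈ tvC Γ, s x = s' x) → substC s Γ = substC s' Γ
  | [], _ => rfl
  | u :: Γ, h => by
    simp only [tvC, List.foldr_cons, Finset.mem_union] at h
    simp only [substC, List.map_cons] at substC_congr ⊢
    rw [substU_congr u fun x hx => h x (.inl hx), substC_congr Γ fun x hx => h x (.inr hx)]

theorem substC_ctxAnd (s : ℕ → Ty) :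
    ∀ Γ Δ : Ctx, substC s (ctxAnd Γ Δ) = ctxAnd (substC s Γ) (substC s Δ)
  | [], _ => rfl
  | _ :: _, [] => rfl
  | u :: Γ, v :: Δ => by
    simp only [ctxAnd, substC, List.map_cons, substU]
    exact congrArg _ (substC_ctxAnd s Γ Δ)

theorem substC_foldl_ctxAnd (s : ℕ → Ty) (Γs : List Ctx) (Γ : Ctx) :
    substC s (Γs.foldl ctxAnd Γ) = (Γs.map (substC s)).foldl ctxAnd (substC s Γ) := by
  induction Γs generalizing Γ with
  | nil => rfl
  | cons Δ Γs ih => simp only [List.foldl_cons, List.map_cons, ih, substC_ctxAnd]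

theorem substC_omegas (s : ℕ → Ty) (k : ℕ) : substC s (omegas k) = omegas k := by
  simp [substC, omegas, substU]

theorem substT_arrChain (s : ℕ → Ty) (σs : List Ty) (τ : Ty) :
    substT s (arrChain σs τ) = arrChain (σs.map (substT s)) (substT s τ) := by
  induction σs with
  | nil => rfl
  | cons σ σs ih =>
    simp only [arrChain, List.foldr_cons, List.map_cons, substT, substU] at ih ⊢
    rw [ih]

theorem SMr.var_inv {k : ℕ} {Γ : Ctx} {τ : Ty} (h : SMr (.var k) Γ τ) :
    ∃ (σs : List Ty) (b : ℕ), CtxEq Γ (omegas k ++ [.ofTy (arrChain σs (.tvar b))]) ∧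
      TyEq τ (arrChain σs (.tvar b)) := by
  generalize hM : Tm.var k = M at h
  induction h generalizing k with
  | varr σs b =>
    cases hM
    exact ⟨σs, b, .refl _, .refl _⟩
  | varn _ ih =>
    cases hM
    obtain ⟨σs, b, hΓ, hτ⟩ := ih rfl
    exact ⟨σs, b, .cons (.refl _) hΓ, hτ⟩
  | conv _ hΓ hτ ih =>
    obtain ⟨σs, b, hΓ', hτ'⟩ := ih hM
    exact ⟨σs, b, hΓ.symm.trans hΓ', hτ.symm.trans hτ'⟩
  | _ => cases hM

theorem SMr.lam_inv {M : Tm} {Γ : Ctx} {τ : Ty} (h : SMr (.lam M) Γ τ) :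
    (∃ u Γ₀ τ₀, SMr M (u :: Γ₀) τ₀ ∧ CtxEq Γ Γ₀ ∧ TyEq τ (.arr u τ₀)) ∨
      (∃ τ₀, SMr M [] τ₀ ∧ Γ = [] ∧ TyEq τ (.arr .omega τ₀)) := by
  generalize hN : Tm.lam M = N at h
  induction h with
  | arrI h =>
    cases hN
    exact .inl ⟨_, _, _, h, .refl _, .refl _⟩
  | arrI' h =>
    cases hN
    exact .inr ⟨_, h, rfl, .refl _⟩
  | conv _ hΓ hτ ih =>
    rcases ih hN with ⟨u, Γ₀, τ₀, h, hΓ', hτ'⟩ | ⟨τ₀, h, rfl, hτ'⟩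
    · exact .inl ⟨u, Γ₀, τ₀, h, hΓ.symm.trans hΓ', hτ.symm.trans hτ'⟩
    · cases hΓ
      exact .inr ⟨τ₀, h, rfl, hτ.symm.trans hτ'⟩
  | _ => cases hN

/-- A (→'e) step is reported with `u = ω` and the typing of its argument. -/
theorem SMr.app_inv {M₁ M₂ : Tm} {Γ : Ctx} {τ : Ty} (h : SMr (.app M₁ M₂) Γ τ) :
    ∃ (Γ₁ : Ctx) (u : IU) (τ₀ : Ty) (Δs : List Ctx) (σs : List Ty),
      SMr M₁ Γ₁ (.arr u τ₀) ∧ (u = .omega ∨ UEq u (interOf σs)) ∧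
      Δs.length = σs.length ∧ σs ≠ [] ∧
      (∀ i < σs.length, SMr M₂ (Δs.getD i []) (σs.getD i (.tvar 0))) ∧
      CtxEq Γ (Δs.foldl ctxAnd Γ₁) ∧ TyEq τ τ₀ := by
  generalize hM : Tm.app M₁ M₂ = M at h
  induction h with
  | @arrE' _ _ Γ₁ Δ τ₀ σ h₁ h₂ =>
    cases hM
    refine ⟨Γ₁, .omega, τ₀, [Δ], [σ], h₁, .inl rfl, rfl, List.cons_ne_nil _ _, ?_,
      .refl _, .refl _⟩
    intro i hi
    obtain rfl : i = 0 := by simpa using hi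
    exact h₂
  | @arrE _ _ Γ₁ τ₀ σs Δs hne hlen h₁ h₂ =>
    cases hM
    exact ⟨Γ₁, interOf σs, τ₀, Δs, σs, h₁, .inr (.refl _), hlen, hne, h₂, .refl _, .refl _⟩
  | conv _ hΓ hτ ih =>
    obtain ⟨Γ₁, u, τ₀, Δs, σs, h₁, hu, hlen, hne, h₂, hΓ', hτ'⟩ := ih hM
    exact ⟨Γ₁, u, τ₀, Δs, σs, h₁, hu, hlen, hne, h₂, hΓ.symm.trans hΓ', hτ.symm.trans hτ'⟩
  | _ => cases hM

theorem SMr.appList_var_inv {k : ℕ} (Ns : List Tm) {Γ : Ctx} {τ : Ty}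
    (h : SMr (appList (.var k) Ns) Γ τ) :
    ∃ (Δs : List Ctx) (es ρs : List Ty) (b : ℕ),
      Δs.length = Ns.length ∧ es.length = Ns.length ∧
      (∀ i < Ns.length, SMr (Ns.getD i (.var 0)) (Δs.getD i []) (es.getD i (.tvar 0))) ∧
      CtxEq Γ (Δs.foldl ctxAnd (omegas k ++ [.ofTy (arrChain (es ++ ρs) (.tvar b))])) ∧
      TyEq τ (arrChain ρs (.tvar b)) := by
  induction Ns using List.reverseRecOn generalizing Γ τ with
  | nil =>
    obtain ⟨σs, b, hΓ, hτ⟩ := h.var_inv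
    exact ⟨[], [], σs, b, rfl, rfl, fun i hi => absurd hi (Nat.not_lt_zero i), hΓ, hτ⟩
  | append_singleton Ms N ih =>
    rw [appList, List.foldl_append, List.foldl_cons, List.foldl_nil, ← appList] at h
    obtain ⟨Γ₁, u, τ₀, Δs₀, σs₀, h₁, hu, hlen₀, hne₀, h₂, hΓ, hτ⟩ := h.app_inv
    obtain ⟨Δs, es, ρs, b, hlenΔ, hlen, hMs, hΓ₁, hτ₀⟩ := ih h₁
    obtain _ | ⟨r, ρs⟩ := ρs
    · exact absurd hτ₀ TyEq.arr_ne_tvar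
    obtain ⟨hur, hτ₀⟩ := hτ₀.arr_inj
    -- the head's domain `r` is a single type, so the argument is typed exactly once
    obtain ⟨e, rfl, her⟩ : ∃ e, σs₀ = [e] ∧ TyEq e r := by
      rcases hu with rfl | hu
      · exact absurd hur UEq.omega_ne_ofTy
      · exact (hu.symm.trans hur).interOf_ofTy_singleton
    obtain ⟨Δ, rfl⟩ := List.length_eq_one_iff.1 hlen₀
    refine ⟨Δs ++ [Δ], es ++ [e], ρs, b, by simp [hlenΔ], by simp [hlen], ?_, ?_,
      hτ.trans hτ₀⟩
    · intro i hi
      rw [List.length_append, List.length_singleton, Nat.lt_succ_iff_lt_or_eq] at hi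
      rcases hi with hi | rfl
      · rw [List.getD_append _ _ _ _ hi, List.getD_append _ _ _ _ (hlenΔ ▸ hi),
          List.getD_append _ _ _ _ (hlen ▸ hi)]
        exact hMs i hi
      · simpa [List.getD_append_right, hlenΔ, hlen] using h₂ 0 (by simp)
    · refine hΓ.trans ?_
      rw [List.foldl_append, List.foldl_cons, List.foldl_nil, List.foldl_cons, List.foldl_nil]
      refine ctxAnd_congr (hΓ₁.trans (foldl_ctxAnd_congr (List.forall₂_refl Δs)
        (List.rel_append (CtxEq.refl _) (.cons (.ofTy ?_) .nil)))) (.refl Δ)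
      rw [List.append_assoc, List.singleton_append]
      exact arrChain_congr
        (List.rel_append (List.forall₂_refl es) (.cons her.symm (List.forall₂_refl ρs))) (.refl _)

theorem _root_.List.forall₂_of_forall_getD {α β : Type*} {R : α → β → Prop} {d₁ : α} {d₂ : β}
    {l₁ : List α} {l₂ : List β} (hlen : l₁.length = l₂.length)
    (h : ∀ i < l₁.length, R (l₁.getD i d₁) (l₂.getD i d₂)) : List.Forall₂ R l₁ l₂ :=
  List.forall₂_of_length_eq_of_get hlen fun i h₁ h₂ => by
    simpa only [List.get_eq_getElem, List.getD_eq_getElem _ _ h₁, List.getD_eq_getElem _ _ h₂]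
      using h i h₁

theorem exists_subst_glue {m : ℕ} {tv : ℕ → Finset ℕ}
    (hdisj : ∀ i j, i < m → j < m → i ≠ j → Disjoint (tv i) (tv j))
    {a : ℕ} (ha : ∀ i < m, a ∉ tv i) (ρ : Ty) (S : ℕ → ℕ → Ty) :
    ∃ s : ℕ → Ty, s a = ρ ∧ ∀ i < m, ∀ x ∈ tv i, s x = S i x := by
  classical
  refine ⟨fun x => if x = a then ρ else
    if hx : ∃ i < m, x ∈ tv i then S hx.choose x else .tvar x, by simp, ?_⟩
  intro i hi x hx
  have hxa : x ≠ a := fun h => ha i hi (h ▸ hx)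
  have hex : ∃ i < m, x ∈ tv i := ⟨i, hi, hx⟩
  have hchoose : hex.choose = i := by
    by_contra hne
    exact Finset.disjoint_left.1 (hdisj _ _ hex.choose_spec.1 hi hne) hex.choose_spec.2 hx
  simp only [if_neg hxa, dif_pos hex, hchoose]

theorem substC_spine_ctxEq {s : ℕ → Ty} {k a b : ℕ} {Γs Δs : List Ctx} {σs es ρs : List Ty}
    (hΓs : List.Forall₂ (fun Γ Δ => CtxEq (substC s Γ) Δ) Γs Δs)
    (hσs : List.Forall₂ (fun σ e => TyEq (substT s σ) e) σs es)
    (ha : s a = arrChain ρs (.tvar b)) :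
    CtxEq (substC s (Γs.foldl ctxAnd (omegas k ++ [.ofTy (arrChain σs (.tvar a))])))
      (Δs.foldl ctxAnd (omegas k ++ [.ofTy (arrChain (es ++ ρs) (.tvar b))])) := by
  rw [substC_foldl_ctxAnd, substC, List.map_append, ← substC, substC_omegas]
  refine foldl_ctxAnd_congr (List.forall₂_map_left_iff.2 hΓs)
    (List.rel_append (CtxEq.refl _) (.cons (.ofTy ?_) .nil))
  rw [substT_arrChain, substT, ha, arrChain_append]
  exact arrChain_congr (List.forall₂_map_left_iff.2 hσs) (.refl _)

theorem exists_subst_appList {k a : ℕ} {Ns : List Tm} {Γs : List Ctx} {σs : List Ty}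
    (hlenΓ : Γs.length = Ns.length) (hlenσ : σs.length = Ns.length)
    (hdisj : ∀ i j, i < Ns.length → j < Ns.length → i ≠ j →
      Disjoint (tvP (Γs.getD i []) (σs.getD i (.tvar 0)))
        (tvP (Γs.getD j []) (σs.getD j (.tvar 0))))
    (ha : ∀ i < Ns.length, a ∉ tvP (Γs.getD i []) (σs.getD i (.tvar 0)))
    (hargs : ∀ i < Ns.length, ∀ {Δ : Ctx} {e : Ty}, SMr (Ns.getD i (.var 0)) Δ e →
      ∃ s : ℕ → Ty, CtxEq (substC s (Γs.getD i [])) Δ ∧ TyEq (substT s (σs.getD i (.tvar 0))) e)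
    {Γ : Ctx} {σ : Ty} (h : SMr (appList (.var k) Ns) Γ σ) :
    ∃ s : ℕ → Ty,
      CtxEq (substC s (Γs.foldl ctxAnd (omegas k ++ [.ofTy (arrChain σs (.tvar a))]))) Γ ∧
        TyEq (s a) σ := by
  obtain ⟨Δs, es, ρs, b, hlenΔ, hlen, hNs, hΓ, hσ⟩ := h.appList_var_inv
  have : Nonempty Ty := ⟨.tvar 0⟩
  choose! S hS using fun i hi => hargs i hi (hNs i hi)
  obtain ⟨s, hsa, hsS⟩ := exists_subst_glue hdisj ha (arrChain ρs (.tvar b)) S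
  refine ⟨s, (substC_spine_ctxEq ?_ ?_ hsa).trans hΓ.symm, hsa ▸ hσ.symm⟩
  · refine List.forall₂_of_forall_getD (d₁ := []) (d₂ := []) (by omega) fun i hi => ?_
    rw [substC_congr _ fun x hx => hsS i (by omega) x (Finset.mem_union_left _ hx)]
    exact (hS i (by omega)).1
  · refine List.forall₂_of_forall_getD (d₁ := .tvar 0) (d₂ := .tvar 0) (by omega)
      fun i hi => ?_
    rw [substT_congr _ fun x hx => hsS i (by omega) x (Finset.mem_union_right _ hx)]
    exact (hS i (by omega)).2

/-- completeness of `Infer`. -/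
theorem infer_complete {N : Tm} {Γ : Ctx} {σ : Ty} {Γ' : Ctx} {σ' : Ty}
    (hnf : IsNF N) (h : SMr N Γ σ) (hinf : InferR N Γ' σ') :
    ∃ s : ℕ → Ty, CtxEq (substC s Γ') Γ ∧ TyEq (substT s σ') σ := by
  clear hnf
  induction hinf generalizing Γ σ with
  | var k a =>
    obtain ⟨σs, b, hΓ, hσ⟩ := h.var_inv
    refine ⟨fun _ => arrChain σs (.tvar b), ?_, hσ.symm⟩
    simpa [substC, omegas, substU, substT] using hΓ.symm
  | lamCons _ ih =>
    rcases h.lam_inv with ⟨v, Γ₀, τ₀, hN, hΓ, hσ⟩ | ⟨τ₀, hN, rfl, -⟩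
    · obtain ⟨s, hΓs, hτ⟩ := ih hN
      obtain _ | ⟨hu, hΓs⟩ := hΓs
      exact ⟨s, CtxEq.trans hΓs hΓ.symm, (TyEq.arr hu hτ).trans hσ.symm⟩
    · obtain ⟨s, hΓs, -⟩ := ih hN
      exact absurd hΓs.length_eq (by simp [substC])
  | lamNil _ ih =>
    rcases h.lam_inv with ⟨v, Γ₀, τ₀, hN, -, -⟩ | ⟨τ₀, hN, rfl, hσ⟩
    · obtain ⟨s, hΓs, -⟩ := ih hN
      exact absurd hΓs.length_eq (by simp [substC])
    · obtain ⟨s, -, hτ⟩ := ih hN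
      exact ⟨s, .nil, (TyEq.arr (.refl _) hτ).trans hσ.symm⟩
  | app k Ns Γs σs a _ hlenΓ hlenσ _ hdisj ha ih =>
    exact exists_subst_appList hlenΓ hlenσ hdisj ha ih h

end DBIT
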